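/- The map X : ℝ² → ℝ², X(a₁,a₂) = (X₁(a₁,a₂), X₂(a₁,a₂)), is differentiable, and for every (a₁,a₂) ∈ ℝ² the absolute value of the determinant of its Jacobian matrix at (a₁,a₂) equals 4π²·|S_ρ(a₁,a₂)|. -/

import Mathlib

/-!
Each of `X₁`, `X₂`, `S_ρ` is a sum of cosines of phases `2π(m a₁ + n a₂)`, so the Jacobian
entries are sines of phases. The Jacobian determinant is a sum of four products of two sines,
and the product-to-sum formula `2 sin u sin v = cos (u - v) - cos (u + v)` turns it into a
combination of cosines of phases in which everything cancels except `-4π² S_ρ`.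
-/

open Real

noncomputable section

/-- `X₁` for `C₂`. -/
def X1 (a : ℝ × ℝ) : ℝ :=
  2 * (Real.cos (2 * π * a.1) + Real.cos (2 * π * (a.1 - a.2)))

/-- `X₂` for `C₂`. -/
def X2 (a : ℝ × ℝ) : ℝ :=
  2 * (Real.cos (2 * π * a.2) + Real.cos (2 * π * (2 * a.1 - a.2)))

/-- The `X`-transform of `C₂`. -/
def Xmap (a : ℝ × ℝ) : ℝ × ℝ := (X1 a, X2 a)

/-- The lowest antisymmetric orbit function `S_ρ` of `C₂`. -/
def Srho (a : ℝ × ℝ) : ℝ :=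
  2 * (Real.cos (2 * π * (a.1 + a.2)) - Real.cos (2 * π * (-a.1 + 2 * a.2)) -
    Real.cos (2 * π * (3 * a.1 - a.2)) + Real.cos (2 * π * (3 * a.1 - 2 * a.2)))

theorem LinearMap.det_prod_finTwo {R : Type*} [CommRing R] (f g : (R × R) →ₗ[R] R) :
    (f.prod g).det = f (1, 0) * g (0, 1) - f (0, 1) * g (1, 0) := by
  rw [← LinearMap.det_toMatrix (Module.Basis.finTwoProd R), Matrix.det_fin_two]
  simp [LinearMap.toMatrix_apply]

theorem hasFDerivAt_two_mul_cos_add_cos {E : Type*} [NormedAddCommGroup E] [NormedSpace ℝ E]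
    (L M : E →L[ℝ] ℝ) (a : E) :
    HasFDerivAt (fun x => 2 * (cos (L x) + cos (M x)))
      ((2 : ℝ) • (-sin (L a) • L + -sin (M a) • M)) a :=
  (L.hasFDerivAt.cos.add M.hasFDerivAt.cos).const_mul 2

def phase (m n : ℝ) : ℝ × ℝ →L[ℝ] ℝ :=
  (2 * π) • (m • ContinuousLinearMap.fst ℝ ℝ ℝ + n • ContinuousLinearMap.snd ℝ ℝ ℝ)

theorem phase_apply (m n : ℝ) (a : ℝ × ℝ) : phase m n a = 2 * π * (m * a.1 + n * a.2) := rfl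

theorem phase_apply_one_zero (m n : ℝ) : phase m n (1, 0) = 2 * π * m := by
  simp [phase_apply]

theorem phase_apply_zero_one (m n : ℝ) : phase m n (0, 1) = 2 * π * n := by
  simp [phase_apply]

theorem phase_add (m n m' n' : ℝ) (a : ℝ × ℝ) :
    phase m n a + phase m' n' a = phase (m + m') (n + n') a := by
  simp only [phase_apply]; ring

theorem phase_sub (m n m' n' : ℝ) (a : ℝ × ℝ) :
    phase m n a - phase m' n' a = phase (m - m') (n - n') a := by
  simp only [phase_apply]; ring

theorem two_mul_sin_phase_mul_sin_phase (m n m' n' : ℝ) (a : ℝ × ℝ) :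
    2 * sin (phase m n a) * sin (phase m' n' a) =
      cos (phase (m - m') (n - n') a) - cos (phase (m + m') (n + n') a) := by
  rw [two_mul_sin_mul_sin, phase_sub, phase_add]

theorem X1_eq : X1 = fun a => 2 * (cos (phase 1 0 a) + cos (phase 1 (-1) a)) := by
  ext a; simp only [X1, phase_apply]; ring_nf

theorem X2_eq : X2 = fun a => 2 * (cos (phase 0 1 a) + cos (phase 2 (-1) a)) := by
  ext a; simp only [X2, phase_apply]; ring_nf

theorem Srho_eq (a : ℝ × ℝ) : Srho a = 2 * (cos (phase 1 1 a) - cos (phase (-1) 2 a) -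
    cos (phase 3 (-1) a) + cos (phase 3 (-2) a)) := by
  simp only [Srho, phase_apply]; ring_nf

theorem hasFDerivAt_Xmap (a : ℝ × ℝ) :
    HasFDerivAt Xmap
      (((2 : ℝ) • (-sin (phase 1 0 a) • phase 1 0 + -sin (phase 1 (-1) a) • phase 1 (-1))).prod
        ((2 : ℝ) • (-sin (phase 0 1 a) • phase 0 1 + -sin (phase 2 (-1) a) • phase 2 (-1)))) a := by
  show HasFDerivAt (fun x => (X1 x, X2 x)) _ a
  rw [X1_eq, X2_eq]
  exact (hasFDerivAt_two_mul_cos_add_cos _ _ a).prodMk (hasFDerivAt_two_mul_cos_add_cos _ _ a)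

theorem det_fderiv_Xmap (a : ℝ × ℝ) : (fderiv ℝ Xmap a).det = -(4 * π ^ 2) * Srho a := by
  rw [(hasFDerivAt_Xmap a).fderiv, ContinuousLinearMap.det, ContinuousLinearMap.coe_prod,
    LinearMap.det_prod_finTwo, Srho_eq]
  simp only [ContinuousLinearMap.coe_coe, smul_apply, add_apply, smul_eq_mul,
    phase_apply_one_zero, phase_apply_zero_one]
  have h₁ := two_mul_sin_phase_mul_sin_phase 1 0 0 1 a
  have h₂ := two_mul_sin_phase_mul_sin_phase 2 (-1) 1 0 a
  have h₃ := two_mul_sin_phase_mul_sin_phase 0 1 1 (-1) a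
  have h₄ := two_mul_sin_phase_mul_sin_phase 2 (-1) 1 (-1) a
  norm_num only at h₁ h₂ h₃ h₄
  linear_combination (8 * π ^ 2) * (h₁ - h₂ + h₃ + h₄)

/-- The `X`-transform of `C₂` is differentiable and the absolute value of
its Jacobian determinant equals `4π²·|S_ρ|`. -/
theorem jacobian_C2 :
    Differentiable ℝ Xmap ∧
    ∀ a : ℝ × ℝ, |(fderiv ℝ Xmap a).det| = 4 * π ^ 2 * |Srho a| := by
  refine ⟨fun a => (hasFDerivAt_Xmap a).differentiableAt, fun a => ?_⟩
  rw [det_fderiv_Xmap, abs_mul, abs_neg, abs_of_pos (by positivity)]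

end
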